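/- For every integer p ≥ 2 and every complex number s with Re s > 1 such that 2s is not an integer, (Γ(1/2−s)/(√π·Γ(s)))·∫_0^∞ x^{2s−1}·( coth(px)/sinh(2x) − 1/(2p·sinh²(x)) ) dx = (1/cos(πs))·( ∑_{m,n≥0} (1+2m+pn)^{−2s} + ∑_{m,n≥0} (1+p+2m+pn)^{−2s} − (1/p)·ζ(2s−1) ). -/

import Mathlib

/-!
In the variable `q = e^{-2t}` one has `coth(pt)/sinh(2t) = 2q(1 + q^p)/((1 - q²)(1 - q^p))` and
`1/(2p sinh²t) = (2/p) q/(1 - q)²`, so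
`g_p(t) = ∑_{m,n} 2q^{1+2m+pn} + ∑_{m,n} 2q^{1+p+2m+pn} - (2/p) ∑_k k q^k`.
Integrating term by term against `t^{w-1}` turns each `q^N = e^{-2Nt}` into `Γ(w) (2N)^{-w}`,
so the Mellin transform of `g_p` is
`Γ(w) 2^{1-w} (ζ_{B2}(w, 1 | 2, p) + ζ_{B2}(w, 1 + p | 2, p) - ζ(w - 1)/p)` for `Re w > 2`.
At `w = 2s` the duplication formula rewrites `Γ(2s) 2^{1-2s}` as `Γ(s) Γ(s + 1/2)/√π`, and the
reflection formula `Γ(s + 1/2) Γ(1/2 - s) = π / cos(πs)` produces the secant.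
-/

open Real Complex MeasureTheory

/-- The elliptic fixed-point integrand `g_p(x) = coth(px)/sinh(2x) - 1/(2p sinh²x)`. -/
noncomputable def ellipticIntegrand (p : ℕ) (x : ℝ) : ℝ :=
  Real.cosh (p * x) / Real.sinh (p * x) / Real.sinh (2 * x) -
    1 / (2 * p * Real.sinh x ^ 2)

def ellipticExponent (p : ℕ) : (ℕ × ℕ) ⊕ (ℕ × ℕ) ⊕ ℕ → ℕ :=
  Sum.elim (fun mn => 1 + 2 * mn.1 + p * mn.2)
    (Sum.elim (fun mn => 1 + p + 2 * mn.1 + p * mn.2) id)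

noncomputable def ellipticCoeff (p : ℕ) : (ℕ × ℕ) ⊕ (ℕ × ℕ) ⊕ ℕ → ℝ :=
  Sum.elim (fun _ => 2) (Sum.elim (fun _ => 2) fun k => -(2 / p * k))

noncomputable def ellipticRational (p : ℕ) (x : ℝ) : ℝ :=
  2 * x * (1 + x ^ p) / (1 - x ^ 2) / (1 - x ^ p) - 2 / p * x / (1 - x) ^ 2

theorem Real.cosh_div_sinh_eq (u : ℝ) :
    Real.cosh u / Real.sinh u = (1 + rexp (-u) ^ 2) / (1 - rexp (-u) ^ 2) := by
  rw [Real.cosh_eq, Real.sinh_eq, div_div_div_cancel_right₀ two_ne_zero,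
    ← mul_div_mul_left _ _ (exp_pos (-u)).ne']
  have h : rexp (-u) * rexp u = 1 := by rw [← Real.exp_add, neg_add_cancel, Real.exp_zero]
  congr 1 <;> linear_combination h

theorem Real.inv_sinh_eq (u : ℝ) :
    (Real.sinh u)⁻¹ = 2 * rexp (-u) / (1 - rexp (-u) ^ 2) := by
  rw [Real.sinh_eq, inv_div, ← mul_div_mul_left _ _ (exp_pos (-u)).ne', mul_sub,
    ← Real.exp_add, mul_comm]
  simp [sq]

theorem ellipticIntegrand_eq_ellipticRational (p : ℕ) (t : ℝ) :
    ellipticIntegrand p t = ellipticRational p (rexp (-t) ^ 2) := by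
  have hp : rexp (-(p * t)) = rexp (-t) ^ p := by rw [← Real.exp_nat_mul]; ring_nf
  have h2 : rexp (-(2 * t)) = rexp (-t) ^ 2 := by
    rw [← Real.exp_nat_mul]; push_cast; ring_nf
  rw [ellipticIntegrand, ellipticRational, div_eq_mul_inv _ (Real.sinh (2 * t)),
    Real.cosh_div_sinh_eq, Real.inv_sinh_eq, one_div, mul_inv, ← inv_pow, Real.inv_sinh_eq,
    hp, h2, div_pow]
  ring

theorem hasSum_pow_add_mul_add_mul {x : ℝ} (hx0 : 0 ≤ x) (hx1 : x < 1) (c : ℕ) {a b : ℕ}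
    (ha : a ≠ 0) (hb : b ≠ 0) :
    HasSum (fun mn : ℕ × ℕ => x ^ (c + a * mn.1 + b * mn.2))
      (x ^ c / (1 - x ^ a) / (1 - x ^ b)) := by
  have hga := hasSum_geometric_of_lt_one (pow_nonneg hx0 a) (pow_lt_one₀ hx0 hx1 ha)
  have hgb := hasSum_geometric_of_lt_one (pow_nonneg hx0 b) (pow_lt_one₀ hx0 hx1 hb)
  have hprod := hga.mul hgb (hga.summable.mul_of_nonneg hgb.summable
    (fun _ => by positivity) (fun _ => by positivity))
  rw [show x ^ c / (1 - x ^ a) / (1 - x ^ b) = x ^ c * ((1 - x ^ a)⁻¹ * (1 - x ^ b)⁻¹) by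
    ring]
  exact (hprod.mul_left (x ^ c)).congr_fun fun mn => by ring

theorem hasSum_ellipticCoeff_mul_pow {p : ℕ} (hp : p ≠ 0) {x : ℝ} (hx0 : 0 ≤ x)
    (hx1 : x < 1) :
    HasSum (fun i => ellipticCoeff p i * x ^ ellipticExponent p i) (ellipticRational p x) := by
  have h1 := (hasSum_pow_add_mul_add_mul hx0 hx1 1 two_ne_zero hp).mul_left 2
  have h2 := (hasSum_pow_add_mul_add_mul hx0 hx1 (1 + p) two_ne_zero hp).mul_left 2
  have h3 := (hasSum_coe_mul_geometric_of_norm_lt_one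
    (by rwa [Real.norm_of_nonneg hx0] : ‖x‖ < 1)).mul_left (-(2 / p : ℝ))
  have h : ellipticRational p x = 2 * (x ^ 1 / (1 - x ^ 2) / (1 - x ^ p)) +
      (2 * (x ^ (1 + p) / (1 - x ^ 2) / (1 - x ^ p)) + -(2 / p) * (x / (1 - x) ^ 2)) := by
    rw [ellipticRational]; ring
  rw [h]
  refine HasSum.sum h1 (HasSum.sum h2 (h3.congr_fun fun k => ?_))
  simp only [Function.comp, ellipticCoeff, ellipticExponent, Sum.elim_inr, id]
  ring

theorem summable_natCast_add_mul_add_mul_cpow_neg {a b c : ℕ} (ha : a ≠ 0) (hb : b ≠ 0)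
    (hc : c ≠ 0) {w : ℂ} (hw : 2 < w.re) :
    Summable fun mn : ℕ × ℕ => ((c + a * mn.1 + b * mn.2 : ℕ) : ℂ) ^ (-w) := by
  have hshift : Summable fun n : ℕ => ((n : ℝ) + 1) ^ (-(w.re / 2)) := by
    simpa using (summable_nat_add_iff 1).mpr
      (Real.summable_nat_rpow.mpr (by linarith : -(w.re / 2) < -1))
  refine .of_norm_bounded (hshift.mul_of_nonneg hshift (fun _ => by positivity)
    (fun _ => by positivity)) fun mn => ?_
  have hN : 0 < c + a * mn.1 + b * mn.2 := by positivity
  have hm : (mn.1 : ℝ) + 1 ≤ (c + a * mn.1 + b * mn.2 : ℕ) := by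
    norm_cast; nlinarith [Nat.one_le_iff_ne_zero.mpr ha, Nat.one_le_iff_ne_zero.mpr hc]
  have hn : (mn.2 : ℝ) + 1 ≤ (c + a * mn.1 + b * mn.2 : ℕ) := by
    norm_cast; nlinarith [Nat.one_le_iff_ne_zero.mpr hb, Nat.one_le_iff_ne_zero.mpr hc]
  have hr : -(w.re / 2) ≤ 0 := by linarith
  rw [norm_natCast_cpow_of_pos hN, neg_re, show -w.re = -(w.re / 2) + -(w.re / 2) by ring,
    Real.rpow_add (by exact_mod_cast hN)]
  exact mul_le_mul (Real.rpow_le_rpow_of_nonpos (by positivity) hm hr)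
    (Real.rpow_le_rpow_of_nonpos (by positivity) hn hr) (by positivity) (by positivity)

theorem two_div_two_mul_natCast_cpow (n : ℕ) (w : ℂ) :
    2 / (2 * n : ℂ) ^ w = 2 ^ (1 - w) * (n : ℂ) ^ (-w) := by
  rw [show (2 * n : ℂ) = ((2 : ℕ) : ℂ) * n by norm_num, natCast_mul_natCast_cpow,
    Nat.cast_ofNat, cpow_neg, cpow_sub _ _ two_ne_zero, cpow_one]
  ring

theorem natCast_div_two_mul_natCast_cpow (n : ℕ) {w : ℂ} (hw : w ≠ 1) :
    (n : ℂ) / (2 * n : ℂ) ^ w = 2 ^ (-w) * (1 / (n : ℂ) ^ (w - 1)) := by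
  rcases eq_or_ne n 0 with rfl | hn
  · simp [zero_cpow (sub_ne_zero.mpr hw)]
  · rw [show (2 * n : ℂ) = ((2 : ℕ) : ℂ) * n by norm_num, natCast_mul_natCast_cpow,
      Nat.cast_ofNat, cpow_neg, cpow_sub _ _ (Nat.cast_ne_zero.mpr hn), cpow_one]
    field_simp

theorem hasSum_ellipticCoeff_div_cpow {p : ℕ} (hp : p ≠ 0) {w : ℂ} (hw : 2 < w.re) :
    HasSum (fun i => (ellipticCoeff p i : ℂ) / ((2 * ellipticExponent p i : ℝ) : ℂ) ^ w)
      (2 ^ (1 - w) * ((∑' mn : ℕ × ℕ, (1 + 2 * (mn.1 : ℂ) + p * mn.2) ^ (-w)) +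
        (∑' mn : ℕ × ℕ, (1 + (p : ℂ) + 2 * mn.1 + p * mn.2) ^ (-w)) -
        1 / p * riemannZeta (w - 1))) := by
  have hw1 : 1 < (w - 1).re := by rw [sub_re, one_re]; linarith
  have hS1 := summable_natCast_add_mul_add_mul_cpow_neg two_ne_zero hp one_ne_zero hw
  have hS2 := summable_natCast_add_mul_add_mul_cpow_neg (c := 1 + p) two_ne_zero hp
    (by omega) hw
  push_cast at hS1 hS2
  have hζ := zeta_eq_tsum_one_div_nat_cpow hw1 ▸
    (Complex.summable_one_div_nat_cpow.mpr hw1).hasSum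
  rw [show ∀ B₁ B₂ ζ : ℂ, 2 ^ (1 - w) * (B₁ + B₂ - 1 / p * ζ) =
    2 ^ (1 - w) * B₁ + (2 ^ (1 - w) * B₂ + -(2 ^ (1 - w) / p) * ζ) by intros; ring]
  refine HasSum.sum ((hS1.hasSum.mul_left _).congr_fun fun mn => ?_)
    (HasSum.sum ((hS2.hasSum.mul_left _).congr_fun fun mn => ?_)
      ((hζ.mul_left _).congr_fun fun k => ?_))
  all_goals simp only [Function.comp, ellipticCoeff, ellipticExponent, Sum.elim_inl,
    Sum.elim_inr, id, ofReal_mul, ofReal_natCast, ofReal_ofNat]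
  · rw [two_div_two_mul_natCast_cpow]; push_cast; ring
  · rw [two_div_two_mul_natCast_cpow]; push_cast; ring
  · have hw1' : w ≠ 1 := by rintro rfl; norm_num at hw
    rw [ofReal_neg, ofReal_mul, ofReal_div, ofReal_ofNat, ofReal_natCast, ofReal_natCast,
      neg_div, mul_div_assoc, natCast_div_two_mul_natCast_cpow k hw1', cpow_neg,
      cpow_sub _ _ two_ne_zero, cpow_one]
    ring

theorem mellin_ellipticIntegrand {p : ℕ} (hp : p ≠ 0) {w : ℂ} (hw : 2 < w.re) :
    mellin (fun x => (ellipticIntegrand p x : ℂ)) w =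
      Complex.Gamma w * 2 ^ (1 - w) *
        ((∑' mn : ℕ × ℕ, (1 + 2 * (mn.1 : ℂ) + p * mn.2) ^ (-w)) +
          (∑' mn : ℕ × ℕ, (1 + (p : ℂ) + 2 * mn.1 + p * mn.2) ^ (-w)) -
          1 / p * riemannZeta (w - 1)) := by
  have hD := hasSum_ellipticCoeff_div_cpow hp hw
  have hM := hasSum_mellin (a := fun i => (ellipticCoeff p i : ℂ))
    (p := fun i => 2 * (ellipticExponent p i : ℝ)) (F := fun x => (ellipticIntegrand p x : ℂ))
    (fun i => ?_) (by linarith) (fun t ht => ?_) ?_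
  · rw [mul_assoc]
    exact hM.unique ((hD.mul_left _).congr_fun fun i => mul_div_assoc _ _ _)
  · rcases i with mn | mn | _ | k
    · exact .inr (by simp only [ellipticExponent, Sum.elim_inl]; positivity)
    · exact .inr (by simp only [ellipticExponent, Sum.elim_inl, Sum.elim_inr]; positivity)
    · exact .inl (by simp [ellipticCoeff])
    · exact .inr (by simp only [ellipticExponent, Sum.elim_inr, id]; positivity)
  · have hx1 : rexp (-t) ^ 2 < 1 :=
      pow_lt_one₀ (exp_pos _).le (Real.exp_lt_one_iff.mpr (neg_neg_of_pos ht)) two_ne_zero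
    rw [ellipticIntegrand_eq_ellipticRational]
    refine (Complex.hasSum_ofReal.mpr (hasSum_ellipticCoeff_mul_pow hp (by positivity) hx1))
      |>.congr_fun fun i => ?_
    rw [← pow_mul, ← Real.exp_nat_mul]
    push_cast; ring_nf
  · refine (summable_norm_iff.mpr hD.summable).congr fun i => ?_
    rw [norm_div, norm_cpow_eq_rpow_re_of_nonneg (by positivity) (by linarith)]

theorem Complex.Gamma_one_half_sub_div_mul_Gamma_two_mul {s : ℂ} (hs : Gamma s ≠ 0) :
    Gamma (1 / 2 - s) / ((√π : ℂ) * Gamma s) * (Gamma (2 * s) * 2 ^ (1 - 2 * s)) =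
      1 / cos (π * s) := by
  have hsqrt : (√π : ℂ) ≠ 0 := ofReal_ne_zero.mpr (Real.sqrt_ne_zero'.mpr pi_pos)
  have hπ : (√π : ℂ) * √π = π := by exact_mod_cast Real.mul_self_sqrt pi_pos.le
  have hduplication := Gamma_mul_Gamma_add_half s
  have hreflection : Gamma (s + 1 / 2) * Gamma (1 / 2 - s) = π / cos (π * s) := by
    rw [← sin_add_pi_div_two, show 1 / 2 - s = 1 - (s + 1 / 2) by ring,
      Gamma_mul_Gamma_one_sub]
    ring_nf
  calc _ = Gamma (s + 1 / 2) * Gamma (1 / 2 - s) / ((√π : ℂ) * √π) := by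
        rw [div_mul_eq_mul_div, div_eq_div_iff (mul_ne_zero hsqrt hs) (mul_ne_zero hsqrt hsqrt)]
        linear_combination -(Gamma (1 / 2 - s) * √π) * hduplication
    _ = 1 / cos (π * s) := by
        rw [hreflection, hπ, div_div_cancel_left' (ofReal_ne_zero.mpr pi_ne_zero), one_div]

theorem elliptic_zeta_secant_form (p : ℕ) (hp : 2 ≤ p) (s : ℂ) (hs : 1 < s.re) :
    (Complex.Gamma (1 / 2 - s) / ((Real.sqrt Real.pi : ℂ) * Complex.Gamma s)) *
        ∫ x in Set.Ioi (0 : ℝ), (x : ℂ) ^ (2 * s - 1) * (ellipticIntegrand p x : ℂ) =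
      (1 / Complex.cos (Real.pi * s)) *
        ((∑' mn : ℕ × ℕ, (1 + 2 * (mn.1 : ℂ) + p * mn.2) ^ (-(2 * s))) +
          (∑' mn : ℕ × ℕ, (1 + (p : ℂ) + 2 * mn.1 + p * mn.2) ^ (-(2 * s))) -
          (1 / p) * riemannZeta (2 * s - 1)) := by
  have hw : 2 < (2 * s).re := by rw [mul_re, re_ofNat, im_ofNat, zero_mul, sub_zero]; linarith
  have hmellin :
      ∫ x in Set.Ioi (0 : ℝ), (x : ℂ) ^ (2 * s - 1) * (ellipticIntegrand p x : ℂ) = _ :=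
    mellin_ellipticIntegrand (by omega) hw
  rw [hmellin, ← mul_assoc, Complex.Gamma_one_half_sub_div_mul_Gamma_two_mul
    (Complex.Gamma_ne_zero_of_re_pos (by linarith))]
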